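/- Let S, W, X̃^n = (X̃_1,...,X̃_n), Y^n be finitely valued random variables and suppose: (i) H(S|W,Y^n) ≤ nε; (ii) (S,W) is a function of X̃^n; (iii) for each i, the chains Y^{i-1} — (S,W,X^{i-1}) — Y_i and X^{i-1} — (S,W,X̃^{i-1}) — X̃_i hold for an auxiliary sequence X^n with (X̃_i, X_i, Y_i) i.i.d. and X̃^n — X^n — Y^n a Markov chain. Then H(W) + nε ≥ I(S,W;X̃^n) − I(S,W;Y^n) ≥ Σ_{i=1}^n [ I(S,W,X^{i-1}; X̃_i) − I(S,W,X^{i-1}; Y_i) ]. -/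

import Mathlib

open scoped BigOperators

section Defs

variable {Ω : Type} [Fintype Ω]

/-- `μ` is a probability mass function on the finite sample space `Ω`. -/
def IsProb (μ : Ω → ℝ) : Prop := (∀ ω, 0 ≤ μ ω) ∧ ∑ ω, μ ω = 1

/-- Probability that the random variable `X` takes the value `a`. -/
noncomputable def pr (μ : Ω → ℝ) {α : Type} [DecidableEq α] (X : Ω → α) (a : α) : ℝ :=
  ∑ ω, if X ω = a then μ ω else 0

/-- Shannon entropy (in bits) of a finitely valued random variable. -/
noncomputable def ent (μ : Ω → ℝ) {α : Type} [Fintype α] [DecidableEq α] (X : Ω → α) : ℝ :=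
  ∑ a, -(pr μ X a * Real.logb 2 (pr μ X a))

/-- Conditional Shannon entropy H(X|Y). -/
noncomputable def cent (μ : Ω → ℝ) {α β : Type} [Fintype α] [DecidableEq α] [Fintype β]
    [DecidableEq β] (X : Ω → α) (Y : Ω → β) : ℝ :=
  ent μ (fun ω => (X ω, Y ω)) - ent μ Y

/-- Mutual information I(X;Y). -/
noncomputable def mi (μ : Ω → ℝ) {α β : Type} [Fintype α] [DecidableEq α] [Fintype β]
    [DecidableEq β] (X : Ω → α) (Y : Ω → β) : ℝ :=
  ent μ X + ent μ Y - ent μ (fun ω => (X ω, Y ω))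

/-- Conditional mutual information I(X;Y|Z). -/
noncomputable def cmi (μ : Ω → ℝ) {α β γ : Type} [Fintype α] [DecidableEq α] [Fintype β]
    [DecidableEq β] [Fintype γ] [DecidableEq γ] (X : Ω → α) (Y : Ω → β) (Z : Ω → γ) : ℝ :=
  ent μ (fun ω => (X ω, Z ω)) + ent μ (fun ω => (Y ω, Z ω))
    - ent μ (fun ω => (X ω, Y ω, Z ω)) - ent μ Z

/-- `X` and `Y` are independent. -/
def Indep (μ : Ω → ℝ) {α β : Type} [DecidableEq α] [DecidableEq β]
    (X : Ω → α) (Y : Ω → β) : Prop :=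
  ∀ a b, pr μ (fun ω => (X ω, Y ω)) (a, b) = pr μ X a * pr μ Y b

/-- Markov chain X — Y — Z : X and Z are conditionally independent given Y. -/
def Markov (μ : Ω → ℝ) {α β γ : Type} [DecidableEq α] [DecidableEq β] [DecidableEq γ]
    (X : Ω → α) (Y : Ω → β) (Z : Ω → γ) : Prop :=
  ∀ a b c, pr μ (fun ω => (X ω, Y ω, Z ω)) (a, b, c) * pr μ Y b
    = pr μ (fun ω => (X ω, Y ω)) (a, b) * pr μ (fun ω => (Y ω, Z ω)) (b, c)

/-- `X` is uniformly distributed on its (finite) value set. -/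
def Uniform (μ : Ω → ℝ) {α : Type} [Fintype α] [DecidableEq α] (X : Ω → α) : Prop :=
  ∀ a, pr μ X a = 1 / (Fintype.card α : ℝ)

/-- Binary entropy function (base-2 logarithm). -/
noncomputable def Hb (x : ℝ) : ℝ := -(x * Real.logb 2 x) - ((1 - x) * Real.logb 2 (1 - x))

end Defs

/-- The coordinates of `Z` are independent and identically distributed. -/
def IID {Ω : Type} [Fintype Ω] (μ : Ω → ℝ) {n : ℕ} {α : Type} [DecidableEq α]
    (Z : Fin n → Ω → α) : Prop :=
  (∀ v : Fin n → α, pr μ (fun ω => fun i => Z i ω) v = ∏ i, pr μ (Z i) (v i)) ∧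
  (∀ i j : Fin n, ∀ a, pr μ (Z i) a = pr μ (Z j) a)

section S
variable {α β γ : Type} [Fintype α] [Fintype β] [Fintype γ]

lemma sum_swap (F : α → β → ℝ) : ∑ x, ∑ y, F x y = ∑ y, ∑ x, F x y := Finset.sum_comm

lemma sum_rot (F : α → β → γ → ℝ) :
    ∑ x, ∑ y, ∑ z, F x y z = ∑ z, ∑ x, ∑ y, F x y z := by
  have h1 : ∑ x, ∑ y, ∑ z, F x y z = ∑ x, ∑ z, ∑ y, F x y z :=
    Finset.sum_congr rfl fun x _ => sum_swap (F x)
  rw [h1]; exact sum_swap (fun x z => ∑ y, F x y z)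

lemma sum_swap23 (F : α → β → γ → ℝ) :
    ∑ x, ∑ y, ∑ z, F x y z = ∑ x, ∑ z, ∑ y, F x y z :=
  Finset.sum_congr rfl fun x _ => sum_swap (F x)

lemma sum_swap12 (F : α → β → γ → ℝ) :
    ∑ x, ∑ y, ∑ z, F x y z = ∑ y, ∑ x, ∑ z, F x y z :=
  sum_swap (fun x y => ∑ z, F x y z)

lemma sum_triple (F : α × β × γ → ℝ) :
    ∑ t, F t = ∑ x, ∑ y, ∑ z, F (x, y, z) := by
  rw [Fintype.sum_prod_type]
  exact Finset.sum_congr rfl fun x _ => by rw [Fintype.sum_prod_type]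

lemma collect_right (f : α → β → ℝ) (g : β → ℝ) :
    ∑ x, ∑ y, f x y * g y = ∑ y, (∑ x, f x y) * g y := by
  rw [sum_swap]
  exact Finset.sum_congr rfl fun y _ => by rw [Finset.sum_mul]
end S


section Core
variable {α β γ : Type} [Fintype α] [Fintype β] [Fintype γ]

lemma mul_log_le {a b : ℝ} (ha : 0 ≤ a) (hb : 0 ≤ b) (hab : b = 0 → a = 0) :
    a * Real.log b - a * Real.log a ≤ b - a := by
  rcases eq_or_lt_of_le ha with h | h
  · simp [← h, hb]
  · have hb' : 0 < b := lt_of_le_of_ne hb (fun h0 => by simp [hab h0.symm] at h)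
    have := Real.log_le_sub_one_of_pos (div_pos hb' h)
    rw [Real.log_div hb'.ne' h.ne'] at this
    calc a * Real.log b - a * Real.log a = a * (Real.log b - Real.log a) := by ring
    _ ≤ a * (b / a - 1) := by exact mul_le_mul_of_nonneg_left this ha
    _ = b - a := by field_simp

lemma gibbs {ι : Type} [Fintype ι] (a b : ι → ℝ) (ha : ∀ i, 0 ≤ a i) (hb : ∀ i, 0 ≤ b i)
    (hd : ∀ i, b i = 0 → a i = 0) (hs : ∑ i, b i ≤ ∑ i, a i) :
    ∑ i, a i * Real.log (b i) ≤ ∑ i, a i * Real.log (a i) := by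
  have h := Finset.sum_le_sum (s := Finset.univ)
    (fun i _ => mul_log_le (ha i) (hb i) (hd i))
  rw [Finset.sum_sub_distrib, Finset.sum_sub_distrib] at h
  linarith

lemma marg_dom {p : α → ℝ} (hp : ∀ x, 0 ≤ p x) (x : α) : p x ≤ ∑ x', p x' :=
  Finset.single_le_sum (fun i _ => hp i) (Finset.mem_univ x)

lemma core_submod (p : α → β → γ → ℝ) (hp : ∀ x y z, 0 ≤ p x y z) :
    (∑ x, ∑ z, (∑ y, p x y z) * Real.log (∑ y, p x y z))
      + (∑ y, ∑ z, (∑ x, p x y z) * Real.log (∑ x, p x y z))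
    ≤ (∑ x, ∑ y, ∑ z, p x y z * Real.log (p x y z))
      + (∑ z, (∑ x, ∑ y, p x y z) * Real.log (∑ x, ∑ y, p x y z)) := by
  classical
  set pXZ : α → γ → ℝ := fun x z => ∑ y, p x y z with hpXZ
  set pYZ : β → γ → ℝ := fun y z => ∑ x, p x y z with hpYZ
  set pZ : γ → ℝ := fun z => ∑ x, ∑ y, p x y z with hpZ
  have hXZ0 : ∀ x z, 0 ≤ pXZ x z := fun x z => Finset.sum_nonneg fun y _ => hp x y z
  have hYZ0 : ∀ y z, 0 ≤ pYZ y z := fun y z => Finset.sum_nonneg fun x _ => hp x y z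
  have hZ0 : ∀ z, 0 ≤ pZ z := fun z => Finset.sum_nonneg fun x _ => hXZ0 x z
  have hdomXZ : ∀ x y z, p x y z ≤ pXZ x z := fun x y z => marg_dom (fun y => hp x y z) y
  have hdomYZ : ∀ x y z, p x y z ≤ pYZ y z := fun x y z => marg_dom (fun x => hp x y z) x
  have hdomZ : ∀ x z, pXZ x z ≤ pZ z := fun x z => marg_dom (fun x => hXZ0 x z) x
  -- define a, b on triple index
  set q : α × β × γ → ℝ := fun t => if pZ t.2.2 = 0 then 0 else pXZ t.1 t.2.2 * pYZ t.2.1 t.2.2 / pZ t.2.2 with hq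
  set a : α × β × γ → ℝ := fun t => p t.1 t.2.1 t.2.2 with haa
  have ha0 : ∀ t, 0 ≤ a t := fun t => hp _ _ _
  have hq0 : ∀ t, 0 ≤ q t := by
    intro t; simp only [hq]
    split_ifs with h
    · exact le_refl 0
    · exact div_nonneg (mul_nonneg (hXZ0 _ _) (hYZ0 _ _)) (hZ0 _)
  have hdom : ∀ t, q t = 0 → a t = 0 := by
    rintro ⟨x, y, z⟩ hqt
    by_contra hne
    have hpos : 0 < p x y z := lt_of_le_of_ne (hp x y z) (Ne.symm hne)
    have hZpos : 0 < pZ z := lt_of_lt_of_le hpos (le_trans (hdomXZ x y z) (hdomZ x z))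
    simp only [hq, hZpos.ne', if_false] at hqt
    have h1 : 0 < pXZ x z := lt_of_lt_of_le hpos (hdomXZ x y z)
    have h2 : 0 < pYZ y z := lt_of_lt_of_le hpos (hdomYZ x y z)
    have := div_pos (mul_pos h1 h2) hZpos
    simp only [hqt] at this
    exact lt_irrefl 0 this
  have hsum : ∑ t, q t ≤ ∑ t, a t := by
    have h1 : ∑ t, q t = ∑ z, (if pZ z = 0 then 0 else pZ z) := by
      rw [sum_triple, sum_rot]
      refine Finset.sum_congr rfl fun z _ => ?_
      by_cases h : pZ z = 0
      · simp [hq, h]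
      · simp only [hq, h, if_false]
        have hy : ∑ y, pYZ y z = pZ z := by
          rw [hpZ]; exact sum_swap (fun y x => p x y z)
        have : ∑ x, ∑ y, pXZ x z * pYZ y z / pZ z
            = (∑ x, pXZ x z) * (∑ y, pYZ y z) / pZ z := by
          rw [Finset.sum_mul, Finset.sum_div]
          refine Finset.sum_congr rfl fun x _ => ?_
          rw [Finset.mul_sum, Finset.sum_div]
        rw [this, hy]
        have hx : ∑ x, pXZ x z = pZ z := rfl
        rw [hx]; field_simp
    have h2 : ∑ t, a t = ∑ z, pZ z := by
      rw [sum_triple, sum_rot]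
    rw [h1, h2]
    refine Finset.sum_le_sum fun z _ => ?_
    split_ifs with h
    · exact hZ0 z
    · exact le_rfl
  have key := gibbs a q ha0 hq0 hdom hsum
  -- rewrite ∑ a log q
  have hlq : ∑ t, a t * Real.log (q t)
      = (∑ x, ∑ z, pXZ x z * Real.log (pXZ x z))
        + (∑ y, ∑ z, pYZ y z * Real.log (pYZ y z))
        - (∑ z, pZ z * Real.log (pZ z)) := by
    rw [sum_triple]
    have hsplit : ∀ x y z, a (x,y,z) * Real.log (q (x,y,z))
        = p x y z * Real.log (pXZ x z) + p x y z * Real.log (pYZ y z)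
          - p x y z * Real.log (pZ z) := by
      intro x y z
      rcases eq_or_lt_of_le (hp x y z) with h0 | h0
      · simp [haa, ← h0]
      · have hZpos : 0 < pZ z := lt_of_lt_of_le h0 (le_trans (hdomXZ x y z) (hdomZ x z))
        have h1 : 0 < pXZ x z := lt_of_lt_of_le h0 (hdomXZ x y z)
        have h2 : 0 < pYZ y z := lt_of_lt_of_le h0 (hdomYZ x y z)
        simp only [hq, haa, hZpos.ne', if_false]
        rw [Real.log_div (mul_ne_zero h1.ne' h2.ne') hZpos.ne', Real.log_mul h1.ne' h2.ne']
        ring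
    rw [Finset.sum_congr rfl fun x _ => Finset.sum_congr rfl fun y _ =>
      Finset.sum_congr rfl fun z _ => hsplit x y z]
    have hT : ∀ x y, ∑ z, (p x y z * Real.log (pXZ x z) + p x y z * Real.log (pYZ y z)
          - p x y z * Real.log (pZ z))
        = ∑ z, p x y z * Real.log (pXZ x z) + ∑ z, p x y z * Real.log (pYZ y z)
          - ∑ z, p x y z * Real.log (pZ z) := fun x y => by
      rw [Finset.sum_sub_distrib, Finset.sum_add_distrib]
    simp only [hT, Finset.sum_add_distrib, Finset.sum_sub_distrib]
    have hT1 : ∑ x, ∑ y, ∑ z, p x y z * Real.log (pXZ x z)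
        = ∑ x, ∑ z, pXZ x z * Real.log (pXZ x z) := by
      refine Finset.sum_congr rfl fun x _ => ?_
      rw [sum_swap (fun y z => p x y z * Real.log (pXZ x z))]
      exact Finset.sum_congr rfl fun z _ => by rw [← Finset.sum_mul]
    have hT2 : ∑ x, ∑ y, ∑ z, p x y z * Real.log (pYZ y z)
        = ∑ y, ∑ z, pYZ y z * Real.log (pYZ y z) := by
      rw [sum_swap12 (fun x y z => p x y z * Real.log (pYZ y z))]
      refine Finset.sum_congr rfl fun y _ => ?_
      rw [sum_swap (fun x z => p x y z * Real.log (pYZ y z))]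
      exact Finset.sum_congr rfl fun z _ => by rw [← Finset.sum_mul]
    have hT3 : ∑ x, ∑ y, ∑ z, p x y z * Real.log (pZ z)
        = ∑ z, pZ z * Real.log (pZ z) := by
      rw [sum_rot (fun x y z => p x y z * Real.log (pZ z))]
      refine Finset.sum_congr rfl fun z _ => ?_
      rw [hpZ]
      rw [Finset.sum_mul]
      exact Finset.sum_congr rfl fun x _ => by rw [← Finset.sum_mul]
    rw [hT1, hT2, hT3]
  have hla : ∑ t, a t * Real.log (a t) = ∑ x, ∑ y, ∑ z, p x y z * Real.log (p x y z) := by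
    rw [Fintype.sum_prod_type]
    exact Finset.sum_congr rfl fun x _ => by rw [Fintype.sum_prod_type]
  rw [hlq, hla] at key
  linarith
lemma core_markov (p : α → β → γ → ℝ) (hp : ∀ x y z, 0 ≤ p x y z)
    (hM : ∀ x y z, p x y z * (∑ x', ∑ z', p x' y z')
      = (∑ z', p x y z') * (∑ x', p x' y z)) :
    (∑ x, ∑ y, ∑ z, p x y z * Real.log (p x y z))
      + (∑ y, (∑ x, ∑ z, p x y z) * Real.log (∑ x, ∑ z, p x y z))
    = (∑ x, ∑ y, (∑ z, p x y z) * Real.log (∑ z, p x y z))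
      + (∑ y, ∑ z, (∑ x, p x y z) * Real.log (∑ x, p x y z)) := by
  classical
  set pXY : α → β → ℝ := fun x y => ∑ z, p x y z with hpXY
  set pYZ : β → γ → ℝ := fun y z => ∑ x, p x y z with hpYZ
  set pY : β → ℝ := fun y => ∑ x, ∑ z, p x y z with hpY
  have hXY0 : ∀ x y, 0 ≤ pXY x y := fun x y => Finset.sum_nonneg fun z _ => hp x y z
  have hYZ0 : ∀ y z, 0 ≤ pYZ y z := fun y z => Finset.sum_nonneg fun x _ => hp x y z
  have hdomXY : ∀ x y z, p x y z ≤ pXY x y := fun x y z => marg_dom (fun z => hp x y z) z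
  have hdomYZ : ∀ x y z, p x y z ≤ pYZ y z := fun x y z => marg_dom (fun x => hp x y z) x
  have hdomY : ∀ x y, pXY x y ≤ pY y := fun x y => marg_dom (fun x => hXY0 x y) x
  have hsplit : ∀ x y z, p x y z * Real.log (p x y z)
      = p x y z * Real.log (pXY x y) + p x y z * Real.log (pYZ y z)
        - p x y z * Real.log (pY y) := by
    intro x y z
    rcases eq_or_lt_of_le (hp x y z) with h0 | h0
    · simp [← h0]
    · have h1 : 0 < pXY x y := lt_of_lt_of_le h0 (hdomXY x y z)
      have h2 : 0 < pYZ y z := lt_of_lt_of_le h0 (hdomYZ x y z)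
      have hY : 0 < pY y := lt_of_lt_of_le h1 (hdomY x y)
      have hpfac : p x y z = pXY x y * pYZ y z / pY y := by
        rw [eq_div_iff hY.ne']
        exact hM x y z
      rw [show Real.log (p x y z) = Real.log (pXY x y) + Real.log (pYZ y z) - Real.log (pY y) by
        rw [hpfac, Real.log_div (mul_ne_zero h1.ne' h2.ne') hY.ne',
          Real.log_mul h1.ne' h2.ne']]
      ring
  rw [Finset.sum_congr rfl fun x _ => Finset.sum_congr rfl fun y _ =>
    Finset.sum_congr rfl fun z _ => hsplit x y z]
  have hT : ∀ x y, ∑ z, (p x y z * Real.log (pXY x y) + p x y z * Real.log (pYZ y z)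
        - p x y z * Real.log (pY y))
      = ∑ z, p x y z * Real.log (pXY x y) + ∑ z, p x y z * Real.log (pYZ y z)
        - ∑ z, p x y z * Real.log (pY y) := fun x y => by
    rw [Finset.sum_sub_distrib, Finset.sum_add_distrib]
  simp only [hT, Finset.sum_add_distrib, Finset.sum_sub_distrib]
  have hT1 : ∑ x, ∑ y, ∑ z, p x y z * Real.log (pXY x y)
      = ∑ x, ∑ y, pXY x y * Real.log (pXY x y) :=
    Finset.sum_congr rfl fun x _ => Finset.sum_congr rfl fun y _ => by rw [← Finset.sum_mul]
  have hT2 : ∑ x, ∑ y, ∑ z, p x y z * Real.log (pYZ y z)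
      = ∑ y, ∑ z, pYZ y z * Real.log (pYZ y z) := by
    rw [sum_swap12 (fun x y z => p x y z * Real.log (pYZ y z))]
    refine Finset.sum_congr rfl fun y _ => ?_
    rw [sum_swap (fun x z => p x y z * Real.log (pYZ y z))]
    exact Finset.sum_congr rfl fun z _ => by rw [← Finset.sum_mul]
  have hT3 : ∑ x, ∑ y, ∑ z, p x y z * Real.log (pY y)
      = ∑ y, pY y * Real.log (pY y) := by
    rw [sum_swap12 (fun x y z => p x y z * Real.log (pY y))]
    refine Finset.sum_congr rfl fun y _ => ?_
    rw [hpY, Finset.sum_mul]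
    exact Finset.sum_congr rfl fun x _ => by rw [← Finset.sum_mul]
  rw [hT1, hT2, hT3]
  ring
end Core


section Lemmas
variable {Ω : Type} [Fintype Ω] {μ : Ω → ℝ} {α β γ : Type}

lemma pr_nonneg [DecidableEq α] (hμ : ∀ ω, 0 ≤ μ ω) (X : Ω → α) (a : α) : 0 ≤ pr μ X a :=
  Finset.sum_nonneg fun ω _ => by split <;> simp [hμ ω]

lemma sum_pr [Fintype α] [DecidableEq α] (X : Ω → α) : ∑ a, pr μ X a = ∑ ω, μ ω := by
  unfold pr
  rw [Finset.sum_comm]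
  exact Finset.sum_congr rfl fun ω _ => by simp

lemma pr_map [DecidableEq α] [Fintype α] [DecidableEq β] (g : α → β) (X : Ω → α) (b : β) :
    pr μ (fun ω => g (X ω)) b = ∑ a, if g a = b then pr μ X a else 0 := by
  unfold pr
  have hpush : ∀ a : α, (if g a = b then ∑ ω : Ω, if X ω = a then μ ω else 0 else 0)
      = ∑ ω : Ω, if g a = b then (if X ω = a then μ ω else 0) else 0 := by
    intro a; split_ifs <;> simp
  rw [Finset.sum_congr rfl fun a _ => hpush a, Finset.sum_comm]
  refine Finset.sum_congr rfl fun ω _ => ?_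
  have : ∀ a : α, (if g a = b then if X ω = a then μ ω else 0 else 0)
      = if X ω = a then (if g a = b then μ ω else 0) else 0 := by
    intro a; split_ifs <;> rfl
  calc (if g (X ω) = b then μ ω else 0)
      = ∑ a : α, if X ω = a then (if g a = b then μ ω else 0) else 0 := by
        rw [Finset.sum_ite_eq Finset.univ (X ω) (fun a => if g a = b then μ ω else 0)]; simp
    _ = ∑ a : α, if g a = b then (if X ω = a then μ ω else 0) else 0 := by
        exact Finset.sum_congr rfl fun a _ => (this a).symm

lemma pr_comp_inj [DecidableEq α] [DecidableEq β] {g : α → β} (hg : Function.Injective g)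
    (X : Ω → α) (a : α) : pr μ (fun ω => g (X ω)) (g a) = pr μ X a := by
  unfold pr; exact Finset.sum_congr rfl fun ω _ => by simp [hg.eq_iff]

lemma pr_comp_ne [DecidableEq α] [DecidableEq β] {g : α → β} (X : Ω → α) {b : β}
    (hb : ∀ a, g a ≠ b) : pr μ (fun ω => g (X ω)) b = 0 := by
  unfold pr; exact Finset.sum_eq_zero fun ω _ => by simp [hb (X ω)]

lemma ent_comp_inj [Fintype α] [DecidableEq α] [Fintype β] [DecidableEq β]
    {g : α → β} (hg : Function.Injective g) (X : Ω → α) :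
    ent μ (fun ω => g (X ω)) = ent μ X := by
  unfold ent
  have h1 : ∑ b : β, -(pr μ (fun ω => g (X ω)) b * Real.logb 2 (pr μ (fun ω => g (X ω)) b))
      = ∑ b ∈ Finset.univ.image g, -(pr μ (fun ω => g (X ω)) b * Real.logb 2 (pr μ (fun ω => g (X ω)) b)) := by
    refine (Finset.sum_subset (Finset.subset_univ _) ?_).symm
    intro b _ hb
    rw [pr_comp_ne X (fun a h => hb (Finset.mem_image.mpr ⟨a, Finset.mem_univ a, h⟩))]
    simp
  rw [h1, Finset.sum_image (fun a _ a' _ h => hg h)]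
  exact Finset.sum_congr rfl fun a _ => by rw [pr_comp_inj hg]

lemma ent_congr_inj [Fintype α] [DecidableEq α] [Fintype β] [DecidableEq β]
    {X : Ω → α} {Y : Ω → β} (g : β → α) (hg : Function.Injective g)
    (h : ∀ ω, X ω = g (Y ω)) : ent μ X = ent μ Y := by
  have : X = fun ω => g (Y ω) := funext h
  rw [this, ent_comp_inj hg]

end Lemmas

section Bridge
set_option linter.unusedSectionVars false
variable {Ω : Type} [Fintype Ω] {μ : Ω → ℝ} {α β γ : Type}

lemma ent_eq [Fintype α] [DecidableEq α] (X : Ω → α) :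
    ent μ X = -((∑ a, pr μ X a * Real.log (pr μ X a)) / Real.log 2) := by
  unfold ent Real.logb
  rw [Finset.sum_congr rfl (fun a _ => show -(pr μ X a * (Real.log (pr μ X a) / Real.log 2))
      = -(pr μ X a * Real.log (pr μ X a)) / Real.log 2 from by ring),
    ← Finset.sum_div, Finset.sum_neg_distrib, neg_div]

-- marginalization lemmas for a triple (X, Y, Z) : note (x, y, z) = (x, (y, z))
variable [Fintype α] [DecidableEq α] [Fintype β] [DecidableEq β] [Fintype γ] [DecidableEq γ]
variable (X : Ω → α) (Y : Ω → β) (Z : Ω → γ)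

lemma pr_marg_y (x : α) (z : γ) :
    ∑ y, pr μ (fun ω => (X ω, Y ω, Z ω)) (x, y, z) = pr μ (fun ω => (X ω, Z ω)) (x, z) := by
  unfold pr
  rw [Finset.sum_comm]
  refine Finset.sum_congr rfl fun ω _ => ?_
  by_cases h1 : X ω = x <;> by_cases h2 : Z ω = z <;> simp [Prod.ext_iff, h1, h2]

lemma pr_marg_x (y : β) (z : γ) :
    ∑ x, pr μ (fun ω => (X ω, Y ω, Z ω)) (x, y, z) = pr μ (fun ω => (Y ω, Z ω)) (y, z) := by
  unfold pr
  rw [Finset.sum_comm]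
  refine Finset.sum_congr rfl fun ω _ => ?_
  by_cases h1 : Y ω = y <;> by_cases h2 : Z ω = z <;> simp [Prod.ext_iff, h1, h2]

lemma pr_marg_z (x : α) (y : β) :
    ∑ z, pr μ (fun ω => (X ω, Y ω, Z ω)) (x, y, z) = pr μ (fun ω => (X ω, Y ω)) (x, y) := by
  unfold pr
  rw [Finset.sum_comm]
  refine Finset.sum_congr rfl fun ω _ => ?_
  by_cases h1 : X ω = x <;> by_cases h2 : Y ω = y <;> simp [Prod.ext_iff, h1, h2]

lemma pr_marg_xy (z : γ) :
    ∑ x, ∑ y, pr μ (fun ω => (X ω, Y ω, Z ω)) (x, y, z) = pr μ Z z := by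
  rw [Finset.sum_congr rfl fun x (_ : x ∈ Finset.univ) => pr_marg_y X Y Z x z]
  unfold pr
  rw [Finset.sum_comm]
  refine Finset.sum_congr rfl fun ω _ => ?_
  by_cases h2 : Z ω = z <;> simp [Prod.ext_iff, h2]

lemma pr_marg_xz (y : β) :
    ∑ x, ∑ z, pr μ (fun ω => (X ω, Y ω, Z ω)) (x, y, z) = pr μ Y y := by
  rw [Finset.sum_congr rfl fun x (_ : x ∈ Finset.univ) => pr_marg_z X Y Z x y]
  unfold pr
  rw [Finset.sum_comm]
  refine Finset.sum_congr rfl fun ω _ => ?_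
  by_cases h2 : Y ω = y <;> simp [Prod.ext_iff, h2]

lemma pr_marg2_l (b : β) :
    ∑ a, pr μ (fun ω => (X ω, Y ω)) (a, b) = pr μ Y b := by
  unfold pr
  rw [Finset.sum_comm]
  refine Finset.sum_congr rfl fun ω _ => ?_
  by_cases h2 : Y ω = b <;> simp [Prod.ext_iff, h2]

lemma pr_marg2_r (a : α) :
    ∑ b, pr μ (fun ω => (X ω, Y ω)) (a, b) = pr μ X a := by
  unfold pr
  rw [Finset.sum_comm]
  refine Finset.sum_congr rfl fun ω _ => ?_
  by_cases h2 : X ω = a <;> simp [Prod.ext_iff, h2]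

lemma ent_triple_eq :
    ent μ (fun ω => (X ω, Y ω, Z ω))
      = -((∑ x, ∑ y, ∑ z, pr μ (fun ω => (X ω, Y ω, Z ω)) (x, y, z)
            * Real.log (pr μ (fun ω => (X ω, Y ω, Z ω)) (x, y, z))) / Real.log 2) := by
  rw [ent_eq, sum_triple]

lemma ent_pair_eq :
    ent μ (fun ω => (X ω, Y ω))
      = -((∑ x, ∑ y, pr μ (fun ω => (X ω, Y ω)) (x, y)
            * Real.log (pr μ (fun ω => (X ω, Y ω)) (x, y))) / Real.log 2) := by
  rw [ent_eq, Fintype.sum_prod_type]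

lemma ent_submod (hμ : ∀ ω, 0 ≤ μ ω) :
    ent μ (fun ω => (X ω, Y ω, Z ω)) + ent μ Z
      ≤ ent μ (fun ω => (X ω, Z ω)) + ent μ (fun ω => (Y ω, Z ω)) := by
  have hL : (0:ℝ) < Real.log 2 := Real.log_pos (by norm_num)
  have hcore := core_submod (fun x y z => pr μ (fun ω => (X ω, Y ω, Z ω)) (x, y, z))
    (fun x y z => pr_nonneg hμ _ _)
  simp only [pr_marg_xy X Y Z, pr_marg_y X Y Z, pr_marg_x X Y Z, pr_marg2_l X Z,
    pr_marg2_l Y Z] at hcore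
  rw [ent_triple_eq, ent_pair_eq, ent_pair_eq, ent_eq Z]
  set sXYZ := ∑ x, ∑ y, ∑ z, pr μ (fun ω => (X ω, Y ω, Z ω)) (x, y, z)
    * Real.log (pr μ (fun ω => (X ω, Y ω, Z ω)) (x, y, z)) with hsXYZ
  set sXZ := ∑ x, ∑ z, pr μ (fun ω => (X ω, Z ω)) (x, z)
    * Real.log (pr μ (fun ω => (X ω, Z ω)) (x, z)) with hsXZ
  set sYZ := ∑ y, ∑ z, pr μ (fun ω => (Y ω, Z ω)) (y, z)
    * Real.log (pr μ (fun ω => (Y ω, Z ω)) (y, z)) with hsYZ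
  set sZ := ∑ z, pr μ Z z * Real.log (pr μ Z z) with hsZ
  have h2 : (-(sXYZ + sZ)) / Real.log 2 ≤ (-(sXZ + sYZ)) / Real.log 2 :=
    (div_le_div_iff_of_pos_right hL).mpr (neg_le_neg hcore)
  calc -(sXYZ / Real.log 2) + -(sZ / Real.log 2) = (-(sXYZ + sZ)) / Real.log 2 := by ring
    _ ≤ (-(sXZ + sYZ)) / Real.log 2 := h2
    _ = -(sXZ / Real.log 2) + -(sYZ / Real.log 2) := by ring

lemma ent_markov (hμ : ∀ ω, 0 ≤ μ ω) (hM : Markov μ X Y Z) :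
    ent μ (fun ω => (X ω, Y ω, Z ω)) + ent μ Y
      = ent μ (fun ω => (X ω, Y ω)) + ent μ (fun ω => (Y ω, Z ω)) := by
  have hcore := core_markov (fun x y z => pr μ (fun ω => (X ω, Y ω, Z ω)) (x, y, z))
    (fun x y z => pr_nonneg hμ _ _) ?hM
  case hM =>
    intro x y z
    rw [pr_marg_xz X Y Z, pr_marg_z X Y Z, pr_marg_x X Y Z]
    exact hM x y z
  simp only [pr_marg_xz X Y Z, pr_marg_z X Y Z, pr_marg_x X Y Z, pr_marg2_l X Y,
    pr_marg2_l Y Z] at hcore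
  rw [ent_triple_eq, ent_pair_eq, ent_pair_eq, ent_eq Y]
  rw [show ∀ a b : ℝ, -(a / Real.log 2) + -(b / Real.log 2) = -((a+b) / Real.log 2) from
    fun a b => by ring, hcore]
  ring

end Bridge
section IIDsec
set_option linter.unusedSectionVars false
variable {Ω : Type} [Fintype Ω] {μ : Ω → ℝ}

lemma prod_entropy_sum {ι κ : Type} [Fintype ι] [DecidableEq ι] [Fintype κ] [DecidableEq κ]
    (p : ι → κ → ℝ) (h0 : ∀ i a, 0 ≤ p i a) (h1 : ∀ i, ∑ a, p i a = 1) :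
    ∑ v : ι → κ, (∏ i, p i (v i)) * Real.log (∏ i, p i (v i))
      = ∑ i, ∑ a, p i a * Real.log (p i a) := by
  have hv : ∀ v : ι → κ, (∏ i, p i (v i)) * Real.log (∏ i, p i (v i))
      = ∑ j, ∏ i, (if i = j then p i (v i) * Real.log (p i (v i)) else p i (v i)) := by
    intro v
    by_cases hz : ∀ i, p i (v i) ≠ 0
    · rw [Real.log_prod (fun i _ => hz i), Finset.mul_sum]
      refine Finset.sum_congr rfl fun j _ => ?_
      rw [← Finset.mul_prod_erase Finset.univ (fun i => if i = j then p i (v i) * Real.log (p i (v i)) else p i (v i)) (Finset.mem_univ j),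
        ← Finset.mul_prod_erase Finset.univ (fun i => p i (v i)) (Finset.mem_univ j)]
      rw [Finset.prod_congr rfl (fun i hi => if_neg (Finset.ne_of_mem_erase hi))]
      simp only [if_pos rfl, eq_self_iff_true, if_true]
      ring
    · push_neg at hz
      obtain ⟨i0, hi0⟩ := hz
      rw [Finset.prod_eq_zero (Finset.mem_univ i0) hi0, zero_mul]
      symm
      refine Finset.sum_eq_zero fun j _ => ?_
      refine Finset.prod_eq_zero (Finset.mem_univ i0) ?_
      by_cases hij : i0 = j
      · rw [if_pos hij, hi0, zero_mul]
      · rw [if_neg hij, hi0]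
  rw [Finset.sum_congr rfl fun v _ => hv v, Finset.sum_comm]
  refine Finset.sum_congr rfl fun j _ => ?_
  rw [← Fintype.prod_sum (fun i a => if i = j then p i a * Real.log (p i a) else p i a)]
  rw [← Finset.mul_prod_erase Finset.univ
    (fun i => ∑ a, if i = j then p i a * Real.log (p i a) else p i a) (Finset.mem_univ j)]
  have hrest : ∏ i ∈ Finset.univ.erase j,
      (∑ a, if i = j then p i a * Real.log (p i a) else p i a) = 1 := by
    refine Finset.prod_eq_one fun i hi => ?_
    rw [Finset.sum_congr rfl fun a _ => if_neg (Finset.ne_of_mem_erase hi)]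
    exact h1 i
  rw [hrest, mul_one]
  simp

lemma ent_indep_seq {n : ℕ} {κ : Type} [Fintype κ] [DecidableEq κ]
    (hμ0 : ∀ ω, 0 ≤ μ ω) (hμ1 : ∑ ω, μ ω = 1) (Z : Fin n → Ω → κ)
    (hprod : ∀ v : Fin n → κ, pr μ (fun ω => fun i => Z i ω) v = ∏ i, pr μ (Z i) (v i)) :
    ent μ (fun ω => fun i => Z i ω) = ∑ i, ent μ (Z i) := by
  rw [ent_eq, Finset.sum_congr rfl (fun v (_ : v ∈ Finset.univ) => by rw [hprod v]),
    prod_entropy_sum (fun i => pr μ (Z i)) (fun i a => pr_nonneg hμ0 _ _)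
      (fun i => by rw [sum_pr]; exact hμ1),
    Finset.sum_congr rfl fun i (_ : (i : Fin n) ∈ Finset.univ) => ent_eq (Z i)]
  rw [Finset.sum_congr rfl fun i (_ : (i : Fin n) ∈ Finset.univ) =>
      (show -((∑ a, pr μ (Z i) a * Real.log (pr μ (Z i) a)) / Real.log 2)
        = -(∑ a, pr μ (Z i) a * Real.log (pr μ (Z i) a)) / Real.log 2 from by ring),
    ← Finset.sum_div, Finset.sum_neg_distrib, neg_div]
end IIDsec
section Seq
set_option linter.unusedSectionVars false
variable {Ω : Type} [Fintype Ω] {μ : Ω → ℝ}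

lemma iid_marg_fst {n : ℕ} {C D E : Type} [Fintype C] [DecidableEq C] [Fintype D]
    [DecidableEq D] [Fintype E] [DecidableEq E]
    (Xt : Fin n → Ω → C) (X : Fin n → Ω → D) (Y : Fin n → Ω → E)
    (h : ∀ v : Fin n → C × D × E, pr μ (fun ω => fun i => (Xt i ω, X i ω, Y i ω)) v
      = ∏ i, pr μ (fun ω => (Xt i ω, X i ω, Y i ω)) (v i))
    (v : Fin n → C) :
    pr μ (fun ω => fun i => Xt i ω) v = ∏ i, pr μ (Xt i) (v i) := by
  have hmap := pr_map (μ := μ) (fun t : Fin n → C × D × E => fun i => (t i).1)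
      (fun ω => fun i => (Xt i ω, X i ω, Y i ω)) v
  calc pr μ (fun ω => fun i => Xt i ω) v
      = ∑ t : Fin n → C × D × E, if (fun i => (t i).1) = v
          then pr μ (fun ω => fun i => (Xt i ω, X i ω, Y i ω)) t else 0 := hmap
    _ = ∑ t : Fin n → C × D × E, if (fun i => (t i).1) = v
          then ∏ i, pr μ (fun ω => (Xt i ω, X i ω, Y i ω)) (t i) else 0 :=
        Finset.sum_congr rfl fun t _ => by rw [h t]
    _ = ∑ t : Fin n → C × D × E, ∏ i,
          (if (t i).1 = v i then pr μ (fun ω => (Xt i ω, X i ω, Y i ω)) (t i) else 0) := by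
        refine Finset.sum_congr rfl fun t _ => ?_
        by_cases ht : (fun i => (t i).1) = v
        · rw [if_pos ht]
          exact (Finset.prod_congr rfl fun i _ => if_pos (congrFun ht i)).symm
        · rw [if_neg ht]
          rw [funext_iff] at ht
          push_neg at ht
          obtain ⟨i0, h0⟩ := ht
          symm
          apply Finset.prod_eq_zero (Finset.mem_univ i0)
          exact if_neg h0
    _ = ∏ i, ∑ f : C × D × E,
          (if f.1 = v i then pr μ (fun ω => (Xt i ω, X i ω, Y i ω)) f else 0) :=
        (Fintype.prod_sum (fun i (f : C × D × E) =>
          if f.1 = v i then pr μ (fun ω => (Xt i ω, X i ω, Y i ω)) f else 0)).symm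
    _ = ∏ i, pr μ (Xt i) (v i) := by
        refine Finset.prod_congr rfl fun i _ => ?_
        rw [Fintype.sum_prod_type]
        have h1 : ∀ c : C, ∑ de : D × E,
            (if (c, de).1 = v i then pr μ (fun ω => (Xt i ω, X i ω, Y i ω)) (c, de) else 0)
            = if c = v i then ∑ de : D × E, pr μ (fun ω => (Xt i ω, X i ω, Y i ω)) (c, de)
              else 0 := by
          intro c; split_ifs with hc <;> simp [hc]
        rw [Finset.sum_congr rfl fun c _ => h1 c,
          Finset.sum_ite_eq' Finset.univ (v i)
            (fun c => ∑ de : D × E, pr μ (fun ω => (Xt i ω, X i ω, Y i ω)) (c, de))]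
        rw [if_pos (Finset.mem_univ _)]
        exact pr_marg2_r (Xt i) (fun ω => (X i ω, Y i ω)) (v i)

lemma ent_prefix_succ {n : ℕ} {U κ : Type} [Fintype U] [DecidableEq U] [Fintype κ]
    [DecidableEq κ] (V : Ω → U) (Z : Fin n → Ω → κ) (k : ℕ) (hk : k < n) :
    ent μ (fun ω => (V ω, fun j : Fin (k+1) => Z (Fin.castLE hk j) ω))
      = ent μ (fun ω => ((V ω, fun j : Fin k => Z (Fin.castLE hk.le j) ω), Z ⟨k, hk⟩ ω)) := by
  have hinj : Function.Injective
      (fun x : (U × (Fin k → κ)) × κ => ((x.1.1, Fin.snoc x.1.2 x.2) : U × (Fin (k+1) → κ))) := by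
    apply Function.LeftInverse.injective
      (g := fun (y : U × (Fin (k+1) → κ)) => ((y.1, fun j : Fin k => y.2 j.castSucc), y.2 (Fin.last k)))
    rintro ⟨⟨v, s⟩, c⟩
    simp
  refine ent_congr_inj _ hinj fun ω => ?_
  refine Prod.ext rfl ?_
  show (fun j : Fin (k+1) => Z (Fin.castLE hk j) ω)
    = Fin.snoc (fun j : Fin k => Z (Fin.castLE hk.le j) ω) (Z ⟨k, hk⟩ ω)
  funext j
  refine Fin.lastCases ?_ ?_ j
  · rw [Fin.snoc_last]
    exact congrArg (fun t => Z t ω) (Fin.ext rfl)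
  · intro j'
    rw [Fin.snoc_castSucc]
    exact congrArg (fun t => Z t ω) (Fin.ext rfl)

lemma ent_prefix_zero {n : ℕ} {U κ : Type} [Fintype U] [DecidableEq U] [Fintype κ]
    [DecidableEq κ] (V : Ω → U) (Z : Fin n → Ω → κ) (h : (0:ℕ) ≤ n) :
    ent μ (fun ω => (V ω, fun j : Fin 0 => Z (Fin.castLE h j) ω)) = ent μ V := by
  refine ent_congr_inj (fun u => (u, fun j : Fin 0 => j.elim0)) ?_ fun ω => ?_
  · intro a b hab
    exact (Prod.ext_iff.mp hab).1
  · exact Prod.ext rfl (funext fun j => j.elim0)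

lemma ent_chain {n : ℕ} {U κ : Type} [Fintype U] [DecidableEq U] [Fintype κ]
    [DecidableEq κ] (V : Ω → U) (Z : Fin n → Ω → κ) :
    ent μ (fun ω => (V ω, fun i => Z i ω)) = ent μ V + ∑ i : Fin n,
      (ent μ (fun ω => ((V ω, fun j : Fin i.val => Z (Fin.castLE i.isLt.le j) ω), Z i ω))
        - ent μ (fun ω => (V ω, fun j : Fin i.val => Z (Fin.castLE i.isLt.le j) ω))) := by
  classical
  set F : ℕ → ℝ := fun k => if h : k ≤ n
    then ent μ (fun ω => (V ω, fun j : Fin k => Z (Fin.castLE h j) ω)) else 0 with hF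
  set G : ℕ → ℝ := fun k => if h : k < n then
      (ent μ (fun ω => ((V ω, fun j : Fin k => Z (Fin.castLE h.le j) ω), Z ⟨k, h⟩ ω))
        - ent μ (fun ω => (V ω, fun j : Fin k => Z (Fin.castLE h.le j) ω))) else 0 with hG
  have htel := Finset.sum_range_sub F n
  have hFn : F n = ent μ (fun ω => (V ω, fun i => Z i ω)) := by
    simp only [hF]
    rw [dif_pos (le_refl n)]
    congr 1
  have hF0 : F 0 = ent μ V := by
    simp only [hF]
    rw [dif_pos (Nat.zero_le n)]
    exact ent_prefix_zero V Z (Nat.zero_le n)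
  have hstep : ∀ k ∈ Finset.range n, F (k+1) - F k = G k := by
    intro k hk
    rw [Finset.mem_range] at hk
    simp only [hF, hG]
    rw [dif_pos hk, dif_pos (show k + 1 ≤ n from hk), dif_pos hk.le]
    rw [ent_prefix_succ V Z k hk]
  rw [Finset.sum_congr rfl hstep, hFn, hF0] at htel
  have hGi : ∀ i : Fin n, G i.val
      = ent μ (fun ω => ((V ω, fun j : Fin i.val => Z (Fin.castLE i.isLt.le j) ω), Z i ω))
        - ent μ (fun ω => (V ω, fun j : Fin i.val => Z (Fin.castLE i.isLt.le j) ω)) := by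
    intro i
    simp only [hG]
    rw [dif_pos i.isLt]
  have hsum2 : ∑ i : Fin n, G i.val = ∑ k ∈ Finset.range n, G k :=
    Fin.sum_univ_eq_sum_range G n
  rw [← Finset.sum_congr rfl fun i _ => hGi i, hsum2, htel]
  ring

end Seq
section Final
set_option linter.unusedSectionVars false
variable {Ω : Type} [Fintype Ω] {μ : Ω → ℝ}

lemma inj_of_linv {α β : Type} (g : α → β) (gi : β → α) (h : ∀ x, gi (g x) = x) :
    Function.Injective g := Function.LeftInverse.injective h

lemma ent_unit (hμ1 : ∑ ω, μ ω = 1) : ent μ (fun _ : Ω => ()) = 0 := by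
  simp [ent, pr, hμ1]

lemma ent_subadd {α β : Type} [Fintype α] [DecidableEq α] [Fintype β] [DecidableEq β]
    (hμ0 : ∀ ω, 0 ≤ μ ω) (hμ1 : ∑ ω, μ ω = 1) (X : Ω → α) (Y : Ω → β) :
    ent μ (fun ω => (X ω, Y ω)) ≤ ent μ X + ent μ Y := by
  have h := ent_submod X Y (fun _ => ()) hμ0
  have e1 : ent μ (fun ω => (X ω, Y ω, ())) = ent μ (fun ω => (X ω, Y ω)) :=
    ent_congr_inj (fun p : α × β => (p.1, p.2, ()))
      (inj_of_linv _ (fun t => (t.1, t.2.1)) (fun x => rfl)) (fun ω => rfl)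
  have e2 : ent μ (fun ω => (X ω, ())) = ent μ X :=
    ent_congr_inj (fun a : α => (a, ()))
      (inj_of_linv _ (fun t => t.1) (fun x => rfl)) (fun ω => rfl)
  have e3 : ent μ (fun ω => (Y ω, ())) = ent μ Y :=
    ent_congr_inj (fun a : β => (a, ()))
      (inj_of_linv _ (fun t => t.1) (fun x => rfl)) (fun ω => rfl)
  have e4 := ent_unit hμ1
  rw [e1, e2, e3, e4] at h
  linarith
end Final
/-- Storage-rate converse step: under Fano's inequality, (S,W) a function of X̃^n,
the per-letter Markov chains, an i.i.d. source, and the degradedness X̃^n — X^n — Y^n,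
we get H(W) + nε ≥ I(S,W;X̃^n) − I(S,W;Y^n)
  ≥ Σ_i [ I(S,W,X^{i-1}; X̃_i) − I(S,W,X^{i-1}; Y_i) ]. -/
theorem stmt8 {Ω : Type} [Fintype Ω] (μ : Ω → ℝ) (n : ℕ) (ε : ℝ)
    {A B C D E : Type} [Fintype A] [DecidableEq A] [Fintype B] [DecidableEq B]
    [Fintype C] [DecidableEq C] [Fintype D] [DecidableEq D] [Fintype E] [DecidableEq E]
    (S : Ω → A) (W : Ω → B)
    (Xt : Fin n → Ω → C) (X : Fin n → Ω → D) (Y : Fin n → Ω → E)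
    (f : (Fin n → C) → A × B)
    (hprob : IsProb μ) (hε : 0 ≤ ε)
    (hfano : cent μ S (fun ω => (W ω, fun i => Y i ω)) ≤ n * ε)
    (hf : ∀ ω, (S ω, W ω) = f (fun i => Xt i ω))
    (hmcY : ∀ i : Fin n,
      Markov μ (fun ω => fun j : Fin i.val => Y (Fin.castLE i.isLt.le j) ω)
        (fun ω => (S ω, W ω, fun j : Fin i.val => X (Fin.castLE i.isLt.le j) ω))
        (Y i))
    (hmcX : ∀ i : Fin n,
      Markov μ (fun ω => fun j : Fin i.val => X (Fin.castLE i.isLt.le j) ω)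
        (fun ω => (S ω, W ω, fun j : Fin i.val => Xt (Fin.castLE i.isLt.le j) ω))
        (Xt i))
    (hiid : IID μ (fun i ω => (Xt i ω, X i ω, Y i ω)))
    (hdeg : Markov μ (fun ω => fun i => Xt i ω) (fun ω => fun i => X i ω)
      (fun ω => fun i => Y i ω)) :
    ent μ W + n * ε
        ≥ mi μ (fun ω => (S ω, W ω)) (fun ω => fun i => Xt i ω)
          - mi μ (fun ω => (S ω, W ω)) (fun ω => fun i => Y i ω) ∧
    mi μ (fun ω => (S ω, W ω)) (fun ω => fun i => Xt i ω)
        - mi μ (fun ω => (S ω, W ω)) (fun ω => fun i => Y i ω)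
      ≥ ∑ i : Fin n,
          (mi μ (fun ω => (S ω, W ω, fun j : Fin i.val => X (Fin.castLE i.isLt.le j) ω))
              (Xt i)
            - mi μ (fun ω => (S ω, W ω, fun j : Fin i.val => X (Fin.castLE i.isLt.le j) ω))
              (Y i)) := by
  obtain ⟨hμ0, hμ1⟩ := hprob
  -- (S,W) is a function of Xt^n
  have hVXt : ent μ (fun ω => ((S ω, W ω), fun i => Xt i ω))
      = ent μ (fun ω => fun i => Xt i ω) :=
    ent_congr_inj (fun v : Fin n → C => (f v, v))
      (inj_of_linv _ (fun t => t.2) (fun x => rfl))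
      (fun ω => by rw [hf ω])
  -- reassociation of (S,W,Y^n)
  have hreassoc : ent μ (fun ω => (S ω, W ω, fun i => Y i ω))
      = ent μ (fun ω => ((S ω, W ω), fun i => Y i ω)) :=
    ent_congr_inj (fun p : (A × B) × (Fin n → E) => (p.1.1, p.1.2, p.2))
      (inj_of_linv _ (fun t => ((t.1, t.2.1), t.2.2)) (fun x => rfl)) (fun ω => rfl)
  have hWY_sub := ent_subadd hμ0 hμ1 W (fun ω => fun i => Y i ω)
  simp only [cent] at hfano
  -- chain rules
  have hchainXt := ent_chain (μ := μ) (fun ω => (S ω, W ω)) Xt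
  have hchainY := ent_chain (μ := μ) (fun ω => (S ω, W ω)) Y
  have hXtn : ent μ (fun ω => fun i => Xt i ω) = ∑ i, ent μ (Xt i) :=
    ent_indep_seq hμ0 hμ1 Xt (fun v => iid_marg_fst Xt X Y hiid.1 v)
  -- subadditivity for Y^n
  have hYsub : ent μ (fun ω => fun i => Y i ω) ≤ ∑ i, ent μ (Y i) := by
    have h0 := ent_chain (μ := μ) (fun _ : Ω => ()) Y
    have hid : ent μ (fun ω => ((), fun i => Y i ω)) = ent μ (fun ω => fun i => Y i ω) :=
      ent_congr_inj (fun y : Fin n → E => ((), y))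
        (inj_of_linv _ (fun t => t.2) (fun x => rfl)) (fun ω => rfl)
    have hper2 : ∀ i ∈ Finset.univ, (ent μ (fun ω =>
          (((), fun j : Fin i.val => Y (Fin.castLE i.isLt.le j) ω), Y i ω))
        - ent μ (fun ω => ((), fun j : Fin i.val => Y (Fin.castLE i.isLt.le j) ω)))
        ≤ ent μ (Y i) := by
      intro i _
      have := ent_subadd hμ0 hμ1
        (fun ω => ((), fun j : Fin i.val => Y (Fin.castLE i.isLt.le j) ω)) (Y i)
      linarith
    have hs := Finset.sum_le_sum hper2
    rw [ent_unit hμ1, hid] at h0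
    linarith
  -- per-letter key inequalities
  have keyX : ∀ i : Fin n,
      ent μ (fun ω => (((S ω, W ω), fun j : Fin i.val => Xt (Fin.castLE i.isLt.le j) ω), Xt i ω))
        - ent μ (fun ω => ((S ω, W ω), fun j : Fin i.val => Xt (Fin.castLE i.isLt.le j) ω))
      ≤ ent μ (fun ω => ((S ω, W ω, fun j : Fin i.val => X (Fin.castLE i.isLt.le j) ω), Xt i ω))
        - ent μ (fun ω => (S ω, W ω, fun j : Fin i.val => X (Fin.castLE i.isLt.le j) ω)) := by
    intro i
    have hmk := ent_markov (fun ω => fun j : Fin i.val => X (Fin.castLE i.isLt.le j) ω)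
      (fun ω => (S ω, W ω, fun j : Fin i.val => Xt (Fin.castLE i.isLt.le j) ω))
      (Xt i) hμ0 (hmcX i)
    have hsub := ent_submod (Xt i)
      (fun ω => fun j : Fin i.val => Xt (Fin.castLE i.isLt.le j) ω)
      (fun ω => (S ω, W ω, fun j : Fin i.val => X (Fin.castLE i.isLt.le j) ω)) hμ0
    have e1 : ent μ (fun ω => ((fun ω => fun j : Fin i.val => X (Fin.castLE i.isLt.le j) ω) ω,
          (S ω, W ω, fun j : Fin i.val => Xt (Fin.castLE i.isLt.le j) ω), Xt i ω))
        = ent μ (fun ω => (Xt i ω, (fun j : Fin i.val => Xt (Fin.castLE i.isLt.le j) ω),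
            (S ω, W ω, fun j : Fin i.val => X (Fin.castLE i.isLt.le j) ω))) :=
      ent_congr_inj (fun u : C × (Fin i.val → C) × (A × B × (Fin i.val → D)) =>
          ((u.2.2.2.2, (u.2.2.1, u.2.2.2.1, u.2.1), u.1) :
            (Fin i.val → D) × (A × B × (Fin i.val → C)) × C))
        (inj_of_linv _ (fun v => (v.2.2, (v.2.1.2.2, (v.2.1.1, v.2.1.2.1, v.1))))
          (fun x => rfl)) (fun ω => rfl)
    have e2 : ent μ (fun ω => ((fun j : Fin i.val => X (Fin.castLE i.isLt.le j) ω),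
          (S ω, W ω, fun j : Fin i.val => Xt (Fin.castLE i.isLt.le j) ω)))
        = ent μ (fun ω => ((fun j : Fin i.val => Xt (Fin.castLE i.isLt.le j) ω),
            (S ω, W ω, fun j : Fin i.val => X (Fin.castLE i.isLt.le j) ω))) :=
      ent_congr_inj (fun u : (Fin i.val → C) × (A × B × (Fin i.val → D)) =>
          ((u.2.2.2, (u.2.1, u.2.2.1, u.1)) : (Fin i.val → D) × (A × B × (Fin i.val → C))))
        (inj_of_linv _ (fun v => (v.2.2.2, (v.2.1, v.2.2.1, v.1))) (fun x => rfl))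
        (fun ω => rfl)
    have e3 : ent μ (fun ω => ((S ω, W ω, fun j : Fin i.val => Xt (Fin.castLE i.isLt.le j) ω),
          Xt i ω))
        = ent μ (fun ω => (((S ω, W ω), fun j : Fin i.val => Xt (Fin.castLE i.isLt.le j) ω),
            Xt i ω)) :=
      ent_congr_inj (fun u : ((A × B) × (Fin i.val → C)) × C =>
          (((u.1.1.1, u.1.1.2, u.1.2) : A × B × (Fin i.val → C)), u.2))
        (inj_of_linv _ (fun v => (((v.1.1, v.1.2.1), v.1.2.2), v.2)) (fun x => rfl))
        (fun ω => rfl)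
    have e4 : ent μ (fun ω => (S ω, W ω, fun j : Fin i.val => Xt (Fin.castLE i.isLt.le j) ω))
        = ent μ (fun ω => ((S ω, W ω), fun j : Fin i.val => Xt (Fin.castLE i.isLt.le j) ω)) :=
      ent_congr_inj (fun u : (A × B) × (Fin i.val → C) =>
          ((u.1.1, u.1.2, u.2) : A × B × (Fin i.val → C)))
        (inj_of_linv _ (fun v => ((v.1, v.2.1), v.2.2)) (fun x => rfl)) (fun ω => rfl)
    have e5 : ent μ (fun ω => (Xt i ω,
          (S ω, W ω, fun j : Fin i.val => X (Fin.castLE i.isLt.le j) ω)))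
        = ent μ (fun ω => ((S ω, W ω, fun j : Fin i.val => X (Fin.castLE i.isLt.le j) ω),
            Xt i ω)) :=
      ent_congr_inj (fun u : (A × B × (Fin i.val → D)) × C => (u.2, u.1))
        (inj_of_linv _ (fun v => (v.2, v.1)) (fun x => rfl)) (fun ω => rfl)
    linarith [hmk, hsub, e1, e2, e3, e4, e5]
  have keyY : ∀ i : Fin n,
      ent μ (fun ω => ((S ω, W ω, fun j : Fin i.val => X (Fin.castLE i.isLt.le j) ω), Y i ω))
        - ent μ (fun ω => (S ω, W ω, fun j : Fin i.val => X (Fin.castLE i.isLt.le j) ω))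
      ≤ ent μ (fun ω => (((S ω, W ω), fun j : Fin i.val => Y (Fin.castLE i.isLt.le j) ω), Y i ω))
        - ent μ (fun ω => ((S ω, W ω), fun j : Fin i.val => Y (Fin.castLE i.isLt.le j) ω)) := by
    intro i
    have hmk := ent_markov (fun ω => fun j : Fin i.val => Y (Fin.castLE i.isLt.le j) ω)
      (fun ω => (S ω, W ω, fun j : Fin i.val => X (Fin.castLE i.isLt.le j) ω))
      (Y i) hμ0 (hmcY i)
    have hsub := ent_submod (Y i)
      (fun ω => fun j : Fin i.val => X (Fin.castLE i.isLt.le j) ω)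
      (fun ω => ((S ω, W ω), fun j : Fin i.val => Y (Fin.castLE i.isLt.le j) ω)) hμ0
    have f1 : ent μ (fun ω => ((fun j : Fin i.val => Y (Fin.castLE i.isLt.le j) ω),
          (S ω, W ω, fun j : Fin i.val => X (Fin.castLE i.isLt.le j) ω), Y i ω))
        = ent μ (fun ω => (Y i ω, (fun j : Fin i.val => X (Fin.castLE i.isLt.le j) ω),
            ((S ω, W ω), fun j : Fin i.val => Y (Fin.castLE i.isLt.le j) ω))) :=
      ent_congr_inj (fun u : E × (Fin i.val → D) × ((A × B) × (Fin i.val → E)) =>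
          ((u.2.2.2, (u.2.2.1.1, u.2.2.1.2, u.2.1), u.1) :
            (Fin i.val → E) × (A × B × (Fin i.val → D)) × E))
        (inj_of_linv _ (fun v => (v.2.2, (v.2.1.2.2, ((v.2.1.1, v.2.1.2.1), v.1))))
          (fun x => rfl)) (fun ω => rfl)
    have f2 : ent μ (fun ω => ((fun j : Fin i.val => Y (Fin.castLE i.isLt.le j) ω),
          (S ω, W ω, fun j : Fin i.val => X (Fin.castLE i.isLt.le j) ω)))
        = ent μ (fun ω => ((fun j : Fin i.val => X (Fin.castLE i.isLt.le j) ω),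
            ((S ω, W ω), fun j : Fin i.val => Y (Fin.castLE i.isLt.le j) ω))) :=
      ent_congr_inj (fun u : (Fin i.val → D) × ((A × B) × (Fin i.val → E)) =>
          ((u.2.2, (u.2.1.1, u.2.1.2, u.1)) : (Fin i.val → E) × (A × B × (Fin i.val → D))))
        (inj_of_linv _ (fun v => (v.2.2.2, ((v.2.1, v.2.2.1), v.1))) (fun x => rfl))
        (fun ω => rfl)
    have f3 : ent μ (fun ω => (Y i ω,
          ((S ω, W ω), fun j : Fin i.val => Y (Fin.castLE i.isLt.le j) ω)))
        = ent μ (fun ω => ((((S ω, W ω), fun j : Fin i.val => Y (Fin.castLE i.isLt.le j) ω)),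
            Y i ω)) :=
      ent_congr_inj (fun u : ((A × B) × (Fin i.val → E)) × E => (u.2, u.1))
        (inj_of_linv _ (fun v => (v.2, v.1)) (fun x => rfl)) (fun ω => rfl)
    linarith [hmk, hsub, f1, f2, f3]
  constructor
  · -- Part 1
    simp only [mi]
    linarith [hVXt, hreassoc, hWY_sub, hfano]
  · -- Part 2
    simp only [mi]
    have hper : ∀ i ∈ Finset.univ,
        (ent μ (fun ω => (S ω, W ω, fun j : Fin i.val => X (Fin.castLE i.isLt.le j) ω))
            + ent μ (Xt i)
            - ent μ (fun ω => ((S ω, W ω, fun j : Fin i.val => X (Fin.castLE i.isLt.le j) ω), Xt i ω))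
          - (ent μ (fun ω => (S ω, W ω, fun j : Fin i.val => X (Fin.castLE i.isLt.le j) ω))
            + ent μ (Y i)
            - ent μ (fun ω => ((S ω, W ω, fun j : Fin i.val => X (Fin.castLE i.isLt.le j) ω), Y i ω))))
        ≤ (ent μ (Xt i)
            - (ent μ (fun ω => (((S ω, W ω), fun j : Fin i.val => Xt (Fin.castLE i.isLt.le j) ω), Xt i ω))
              - ent μ (fun ω => ((S ω, W ω), fun j : Fin i.val => Xt (Fin.castLE i.isLt.le j) ω))))
          - (ent μ (Y i)
            - (ent μ (fun ω => (((S ω, W ω), fun j : Fin i.val => Y (Fin.castLE i.isLt.le j) ω), Y i ω))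
              - ent μ (fun ω => ((S ω, W ω), fun j : Fin i.val => Y (Fin.castLE i.isLt.le j) ω)))) := by
      intro i _
      have h1 := keyX i
      have h2 := keyY i
      linarith
    have hsum := Finset.sum_le_sum hper
    simp only [Finset.sum_sub_distrib, Finset.sum_add_distrib] at hsum hchainXt hchainY ⊢
    linarith [hsum, hchainXt, hchainY, hXtn, hYsub, hVXt]
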